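/- arXiv:2111.04359 — 3 statements merged into one kernel-verified Lean document; each statement's English description precedes it below -/
import Mathlib

section
/- For all indices k = Σ_{l=0}^{n} k_l 2^l and j = Σ_{l=0}^{n} j_l 2^l with bits k_l, j_l ∈ {0,1}, the matrix entry of U_Φ satisfies ⟨k| U_Φ |j⟩ = 2^{−(n+1)/2} · u_{k₀}ᵀ · M_{n, j₁, k₁} · M_{n−1, j₂, k₂} ⋯ M_{1, j_n, k_n} · v_{j₀}, i.e. the l-th factor from the right is M_{l, j_{n+1−l}, k_{n+1−l}}. -/
open Complex Matrix

/-- The single-qubit gate `R_X(−π/2) = (1/√2)[[1, i],[i, 1]]`. -/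
noncomputable def RXgate : Matrix (Fin 2) (Fin 2) ℂ :=
  (1 / Real.sqrt 2 : ℝ) • !![1, I; I, 1]

/-- The single-qubit phase gate `Φ = [[1,0],[0,e^{ix}]]`. -/
noncomputable def phaseGate (x : ℝ) : Matrix (Fin 2) (Fin 2) ℂ :=
  !![1, 0; 0, Complex.exp (I * x)]

/-- A single-qubit gate `A` applied to the photon qubit (bit `0`) of the
`(n+1)`-qubit space `ℂ^{2^{n+1}}`, whose computational basis vectors `|j⟩` are
indexed by integers `j = Σ_l j_l 2^l`. -/
noncomputable def photonGate (n : ℕ) (A : Matrix (Fin 2) (Fin 2) ℂ) :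
    Matrix (Fin (2 ^ (n + 1))) (Fin (2 ^ (n + 1))) ℂ :=
  fun k j => if (k : ℕ) / 2 = (j : ℕ) / 2
    then A ⟨(k : ℕ) % 2, by omega⟩ ⟨(j : ℕ) % 2, by omega⟩ else 0

/-- CNOT gate on `ℂ^{2^{n+1}}` with control the photon qubit (bit `0`) and target
bit `t`: it maps `|j⟩` to `|j XOR 2^t⟩` when bit `0` of `j` is `1`, else `|j⟩`. -/
def cnotGate (n t : ℕ) : Matrix (Fin (2 ^ (n + 1))) (Fin (2 ^ (n + 1))) ℂ :=
  fun k j =>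
    if (k : ℕ) = (if (j : ℕ) % 2 = 1 then (j : ℕ) ^^^ 2 ^ t else (j : ℕ)) then 1 else 0

/-- The `k`-th step `S_k` of the which-path-detector circuit: for `1 ≤ k ≤ n` it applies
`R_X(−π/2)` followed by `Φ_k` to the photon qubit and then a CNOT with control the photon
qubit and target the `k`-th detector qubit (bit `n+1−k`); `S_{n+1}` applies `R_X(−π/2)`
followed by `Φ_{n+1}` to the photon qubit (no CNOT). -/
noncomputable def stepGate (n : ℕ) (φ : ℕ → ℝ) (k : ℕ) :
    Matrix (Fin (2 ^ (n + 1))) (Fin (2 ^ (n + 1))) ℂ :=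
  (if k ≤ n then cnotGate n (n + 1 - k) else 1) * photonGate n (phaseGate (φ k) * RXgate)

/-- The ordered product `S_k ⋯ S_2 S_1`. -/
noncomputable def Sprod (n : ℕ) (φ : ℕ → ℝ) :
    ℕ → Matrix (Fin (2 ^ (n + 1))) (Fin (2 ^ (n + 1))) ℂ
  | 0 => 1
  | k + 1 => stepGate n φ (k + 1) * Sprod n φ k

/-- The unitary operator `U_Φ = S_{n+1} S_n ⋯ S_1` on the `(n+1)`-qubit space. -/
noncomputable def Uphi (n : ℕ) (φ : ℕ → ℝ) :
    Matrix (Fin (2 ^ (n + 1))) (Fin (2 ^ (n + 1))) ℂ :=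
  Sprod n φ (n + 1)

/-- The rotation matrix `R(a) = [[cos a, −sin a],[sin a, cos a]]` (with complex entries). -/
noncomputable def Rrot (a : ℝ) : Matrix (Fin 2) (Fin 2) ℂ :=
  !![(Real.cos a : ℂ), -(Real.sin a : ℂ); (Real.sin a : ℂ), (Real.cos a : ℂ)]

/-- A `4×4` matrix built from four `2×2` blocks. -/
def blk (A B C D : Matrix (Fin 2) (Fin 2) ℂ) : Matrix (Fin 4) (Fin 4) ℂ :=
  Matrix.reindex finSumFinEquiv finSumFinEquiv (Matrix.fromBlocks A B C D)

/-- The `4×4` block matrices `M_{j,D,e}`: for `j ≤ n−1`,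
`M_{j,D,e} = [[I₂, R(π/2)],[0,0]]` if `e = D` and `[[0,0],[R(φ_j+π/2), R(φ_j)]]` if `e ≠ D`;
for `j = n`, `M_{n,D,e} = [[I₂,0],[R(φ_{n+1}+π/2),0]]·[[I₂,R(π/2)],[0,0]]` if `e = D` and
`[[0,R(π/2)],[0,R(φ_{n+1})]]·[[0,0],[R(φ_n+π/2),R(φ_n)]]` if `e ≠ D`. -/
noncomputable def Mmat (n : ℕ) (φ : ℕ → ℝ) (j : ℕ) (D e : Bool) :
    Matrix (Fin 4) (Fin 4) ℂ :=
  if j = n then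
    if e = D then
      blk 1 0 (Rrot (φ (n + 1) + Real.pi / 2)) 0 * blk 1 (Rrot (Real.pi / 2)) 0 0
    else
      blk 0 (Rrot (Real.pi / 2)) 0 (Rrot (φ (n + 1))) *
        blk 0 0 (Rrot (φ n + Real.pi / 2)) (Rrot (φ n))
  else
    if e = D then blk 1 (Rrot (Real.pi / 2)) 0 0
    else blk 0 0 (Rrot (φ j + Real.pi / 2)) (Rrot (φ j))

/-- `v₀ = (1,0,0,0)ᵀ`, `v₁ = (0,0,1,0)ᵀ` (indexed by the corresponding bit). -/
def vvec : Bool → Fin 4 → ℂ := fun Q => if Q then ![0, 0, 1, 0] else ![1, 0, 0, 0]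

/-- `u₀ = (1,i,0,0)ᵀ`, `u₁ = (0,0,1,i)ᵀ` (indexed by the corresponding bit). -/
noncomputable def uvec : Bool → Fin 4 → ℂ := fun k => if k then ![0, 0, 1, I] else ![1, I, 0, 0]

/-- The ordered product `M_{n, j₁, k₁} · M_{n−1, j₂, k₂} ⋯ M_{1, j_n, k_n}` (its `l`-th
factor from the right is `M_{l, j_{n+1−l}, k_{n+1−l}}`), where `jb`/`kb` give the binary
digits of the column/row indices. -/
noncomputable def Mprod (n : ℕ) (φ : ℕ → ℝ) (jb kb : ℕ → Bool) :
    ℕ → Matrix (Fin 4) (Fin 4) ℂ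
  | 0 => 1
  | l + 1 => Mmat n φ (l + 1) (jb (n - l)) (kb (n - l)) * Mprod n φ jb kb l

/-! The row vector `(1, i)` is a left eigenvector of every rotation, `(1, i) R(a) = e^{ia} (1, i)`.
Hence for `u₀ = (1, i, 0, 0)`, `u₁ = (0, 0, 1, i)` the block matrix
`L_x = [[I₂, R(π/2)], [R(x + π/2), R(x)]]` (`finalMat x`) acts on the rows `u_a` as the photon
gate `P_x = √2 Φ_x R_X(−π/2)` acts on `|a⟩`: `u_aᵀ L_x = Σ_b (P_x)_{ab} u_bᵀ`. The generic factor
`M_{j,D,e}` (`transferMat (φ j) D e`) is `L_{φ_j}` with one block row deleted, so it moreover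
enforces `e ⊕ a = D`: the CNOT onto a detector qubit flips its bit exactly when the photon bit
`a` is `1`. The special factor `M_{n,D,e}` is `L_{φ_{n+1}}` times the generic one, which accounts
for the last gate `S_{n+1}`.

By induction over the steps, `⟨k| S_m ⋯ S_1 |j⟩` is `2^{-m/2}` times the indicator that the
detector bits `1, …, n - m` of `k` and `j`, not yet touched, agree, times the product
`u_{k₀}ᵀ M_{m,…} ⋯ M_{1,…} v_{j₀}` of generic factors. -/

noncomputable section

lemma append_comp_finSumFinEquiv {α : Type*} {m k : ℕ} (x : Fin m → α) (y : Fin k → α) :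
    Fin.append x y ∘ finSumFinEquiv = Sum.elim x y :=
  Fin.append_comp_sumElim

lemma append_zero_zero {α : Type*} [Zero α] {m k : ℕ} :
    Fin.append (0 : Fin m → α) (0 : Fin k → α) = 0 := by
  funext i
  refine Fin.addCases (fun i => ?_) (fun i => ?_) i <;> simp

lemma vecMul_blk (x y : Fin 2 → ℂ) (A B C D : Matrix (Fin 2) (Fin 2) ℂ) :
    Fin.append x y ᵥ* blk A B C D = Fin.append (x ᵥ* A + y ᵥ* C) (x ᵥ* B + y ᵥ* D) := by
  rw [blk, reindex_apply, submatrix_vecMul_equiv, Equiv.symm_symm, append_comp_finSumFinEquiv,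
    vecMul_fromBlocks, Equiv.comp_symm_eq, append_comp_finSumFinEquiv]
  rfl

lemma blk_mul (A B C D A' B' C' D' : Matrix (Fin 2) (Fin 2) ℂ) :
    blk A B C D * blk A' B' C' D' =
      blk (A * A' + B * C') (A * B' + B * D') (C * A' + D * C') (C * B' + D * D') := by
  simp only [blk, reindex_apply, submatrix_mul_equiv _ _ _ finSumFinEquiv.symm,
    fromBlocks_multiply]

lemma vecMul_Rrot (a : ℝ) : ![1, I] ᵥ* Rrot a = exp (a * I) • ![1, I] := by
  ext i
  fin_cases i <;> simp [Rrot, vecMul, dotProduct, exp_mul_I, ← ofReal_cos, ← ofReal_sin]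
  · ring
  · linear_combination -(Real.sin a : ℂ) * I_sq

lemma exp_add_pi_div_two_mul_I (x : ℝ) :
    exp ((x + Real.pi / 2 : ℂ) * I) = exp (x * I) * I := by
  rw [add_mul, Complex.exp_add, exp_pi_div_two_mul_I]

lemma uvec_false : uvec false = Fin.append ![1, I] (0 : Fin 2 → ℂ) := by
  ext i; fin_cases i <;> rfl

lemma uvec_true : uvec true = Fin.append (0 : Fin 2 → ℂ) ![1, I] := by
  ext i; fin_cases i <;> rfl

lemma sum_smul_uvec (p : Bool → ℂ) :
    ∑ b, p b • uvec b = Fin.append (p false • ![1, I]) (p true • ![1, I]) := by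
  ext i; fin_cases i <;> simp [uvec, Fin.append, Fin.addCases]

lemma uvec_dotProduct_vvec (a b : Bool) : uvec a ⬝ᵥ vvec b = if a = b then 1 else 0 := by
  cases a <;> cases b <;> simp [uvec, vvec, dotProduct, Fin.sum_univ_four]

def phaseRX (x : ℝ) : Matrix (Fin 2) (Fin 2) ℂ := phaseGate x * !![1, I; I, 1]

lemma phaseGate_mul_RXgate (x : ℝ) :
    phaseGate x * RXgate = ((1 / Real.sqrt 2 : ℝ) : ℂ) • phaseRX x := by
  rw [RXgate, Matrix.mul_smul, phaseRX, ← Complex.coe_smul]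

lemma phaseRX_apply (x : ℝ) (a b : Bool) :
    phaseRX x (finTwoEquiv.symm a) (finTwoEquiv.symm b) =
      (if a then exp (x * I) else 1) * (if a = b then 1 else I) := by
  cases a <;> cases b <;> simp [phaseRX, phaseGate, finTwoEquiv, mul_comm]

def finalMat (x : ℝ) : Matrix (Fin 4) (Fin 4) ℂ :=
  blk 1 (Rrot (Real.pi / 2)) (Rrot (x + Real.pi / 2)) (Rrot x)

def transferMat (x : ℝ) (D e : Bool) : Matrix (Fin 4) (Fin 4) ℂ :=
  if e = D then blk 1 (Rrot (Real.pi / 2)) 0 0 else blk 0 0 (Rrot (x + Real.pi / 2)) (Rrot x)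

lemma uvec_vecMul_finalMat (x : ℝ) (a : Bool) :
    uvec a ᵥ* finalMat x =
      ∑ b, phaseRX x (finTwoEquiv.symm a) (finTwoEquiv.symm b) • uvec b := by
  rw [sum_smul_uvec]
  cases a <;> simp [uvec_false, uvec_true, finalMat, vecMul_blk, vecMul_Rrot, phaseRX_apply,
    exp_add_pi_div_two_mul_I]

lemma uvec_vecMul_transferMat (x : ℝ) (D e a : Bool) :
    uvec a ᵥ* transferMat x D e = (if (e ^^ a) = D then 1 else 0 : ℂ) •
      ∑ b, phaseRX x (finTwoEquiv.symm a) (finTwoEquiv.symm b) • uvec b := by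
  rw [sum_smul_uvec]
  cases a <;> cases D <;> cases e <;> simp [uvec_false, uvec_true, transferMat, vecMul_blk,
    vecMul_Rrot, phaseRX_apply, exp_add_pi_div_two_mul_I, append_zero_zero]

lemma Mmat_self (n : ℕ) (φ : ℕ → ℝ) (D e : Bool) :
    Mmat n φ n D e = finalMat (φ (n + 1)) * transferMat (φ n) D e := by
  by_cases h : e = D <;> simp [Mmat, finalMat, transferMat, h, blk_mul]

def transferProd (n : ℕ) (φ : ℕ → ℝ) (jb kb : ℕ → Bool) : ℕ → Matrix (Fin 4) (Fin 4) ℂ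
  | 0 => 1
  | l + 1 => transferMat (φ (l + 1)) (jb (n - l)) (kb (n - l)) * transferProd n φ jb kb l

lemma Mprod_eq_transferProd {n m : ℕ} (φ : ℕ → ℝ) (jb kb : ℕ → Bool) (hm : m < n) :
    Mprod n φ jb kb m = transferProd n φ jb kb m := by
  induction m with
  | zero => rfl
  | succ l ih => rw [Mprod, transferProd, ih (by omega), Mmat, if_neg (by omega)]; rfl

lemma Mprod_self {n : ℕ} (φ : ℕ → ℝ) (jb kb : ℕ → Bool) (hn : 1 ≤ n) :
    Mprod n φ jb kb n = finalMat (φ (n + 1)) * transferProd n φ jb kb n := by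
  obtain ⟨m, rfl⟩ : ∃ m, n = m + 1 := ⟨n - 1, by omega⟩
  rw [Mprod, transferProd, Nat.add_sub_cancel_left, Mmat_self,
    Mprod_eq_transferProd φ jb kb (Nat.lt_succ_self m), Matrix.mul_assoc]

lemma transferProd_congr {n m : ℕ} (φ : ℕ → ℝ) (jb kb kb' : ℕ → Bool)
    (h : ∀ l < m, kb (n - l) = kb' (n - l)) :
    transferProd n φ jb kb m = transferProd n φ jb kb' m := by
  induction m with
  | zero => rfl
  | succ l ih =>
    rw [transferProd, transferProd, ih fun l' hl' => h l' (by omega), h l (by omega)]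

def cnotTarget (t k : ℕ) : ℕ := if k % 2 = 1 then k ^^^ 2 ^ t else k

lemma testBit_cnotTarget (t k l : ℕ) :
    (cnotTarget t k).testBit l = (k.testBit l ^^ (decide (t = l) && k.testBit 0)) := by
  by_cases h : k % 2 = 1 <;> simp [cnotTarget, h, Nat.testBit_xor, Nat.testBit_two_pow]

lemma testBit_zero_cnotTarget {t : ℕ} (ht : t ≠ 0) (k : ℕ) :
    (cnotTarget t k).testBit 0 = k.testBit 0 := by
  rw [testBit_cnotTarget]
  simp [ht]

lemma cnotTarget_cnotTarget {t : ℕ} (ht : t ≠ 0) (k : ℕ) : cnotTarget t (cnotTarget t k) = k :=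
  Nat.eq_of_testBit_eq fun l => by
    rw [testBit_cnotTarget, testBit_cnotTarget, testBit_zero_cnotTarget ht, Bool.xor_assoc,
      Bool.xor_self, Bool.xor_false]

lemma cnotTarget_lt {t N k : ℕ} (ht : t < N) (hk : k < 2 ^ N) : cnotTarget t k < 2 ^ N := by
  unfold cnotTarget
  split
  · exact Nat.xor_lt_two_pow hk (Nat.pow_lt_pow_right (by norm_num) ht)
  · exact hk

lemma cnotGate_apply (n t : ℕ) (k j : Fin (2 ^ (n + 1))) :
    cnotGate n t k j = if (k : ℕ) = cnotTarget t j then 1 else 0 := rfl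

lemma cnotGate_mul_apply {n t : ℕ} (ht : t ≠ 0) (htn : t ≤ n)
    (B : Matrix (Fin (2 ^ (n + 1))) (Fin (2 ^ (n + 1))) ℂ) (k j : Fin (2 ^ (n + 1))) :
    (cnotGate n t * B) k j = B ⟨cnotTarget t k, cnotTarget_lt (by omega) k.2⟩ j := by
  rw [mul_apply, Fintype.sum_eq_single ⟨cnotTarget t k, cnotTarget_lt (by omega) k.2⟩]
  · simp [cnotGate_apply, cnotTarget_cnotTarget ht]
  · intro y hy
    have : (k : ℕ) ≠ cnotTarget t y :=
      fun h => hy (Fin.ext (by simp [h, cnotTarget_cnotTarget ht]))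
    simp [cnotGate_apply, this]

lemma bit_div_two_lt {n k : ℕ} (hk : k < 2 ^ (n + 1)) (b : Bool) :
    Nat.bit b (k / 2) < 2 ^ (n + 1) :=
  Nat.bit_lt_two_pow_succ_iff.mpr (by rw [pow_succ] at hk; omega)

lemma testBit_bit_div_two (b : Bool) (k l : ℕ) (hl : l ≠ 0) :
    (Nat.bit b (k / 2)).testBit l = k.testBit l := by
  obtain ⟨l, rfl⟩ := Nat.exists_eq_succ_of_ne_zero hl
  rw [Nat.testBit_bit_succ, Nat.testBit_div_two]

lemma photonGate_apply_bit {n : ℕ} (A : Matrix (Fin 2) (Fin 2) ℂ) (k : Fin (2 ^ (n + 1)))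
    (b : Bool) : photonGate n A k ⟨Nat.bit b (k / 2), bit_div_two_lt k.2 b⟩ =
      A (finTwoEquiv.symm ((k : ℕ).testBit 0)) (finTwoEquiv.symm b) := by
  simp only [photonGate, Nat.bit_div_two, if_true, Nat.bit_mod_two]
  congr 1 <;> ext
  · rcases Nat.mod_two_eq_zero_or_one k with h | h <;> simp [finTwoEquiv, h]
  · cases b <;> rfl

lemma photonGate_mul_apply {n : ℕ} (A : Matrix (Fin 2) (Fin 2) ℂ)
    (B : Matrix (Fin (2 ^ (n + 1))) (Fin (2 ^ (n + 1))) ℂ) (k j : Fin (2 ^ (n + 1))) :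
    (photonGate n A * B) k j = ∑ b : Bool, A (finTwoEquiv.symm ((k : ℕ).testBit 0))
      (finTwoEquiv.symm b) * B ⟨Nat.bit b (k / 2), bit_div_two_lt k.2 b⟩ j := by
  rw [mul_apply, Fintype.sum_eq_add ⟨Nat.bit true (k / 2), bit_div_two_lt k.2 true⟩
    ⟨Nat.bit false (k / 2), bit_div_two_lt k.2 false⟩ (by simp [Nat.bit_val]), Fintype.sum_bool,
    photonGate_apply_bit, photonGate_apply_bit]
  rintro x ⟨h1, h0⟩
  have : (k : ℕ) / 2 ≠ x / 2 := by
    intro h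
    rcases Nat.mod_two_eq_zero_or_one x with hx | hx
    · exact h0 (Fin.ext (by simp [Nat.bit_val]; omega))
    · exact h1 (Fin.ext (by simp [Nat.bit_val]; omega))
  simp [photonGate, this]

def bitsAgree (t a b : ℕ) : ℂ :=
  ∏ i ∈ Finset.range t, if a.testBit (i + 1) = b.testBit (i + 1) then 1 else 0

lemma bitsAgree_congr {t a a' : ℕ} (b : ℕ) (h : ∀ l, l ≠ 0 → a.testBit l = a'.testBit l) :
    bitsAgree t a b = bitsAgree t a' b :=
  Finset.prod_congr rfl fun i _ => by rw [h (i + 1) i.succ_ne_zero]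

lemma bitsAgree_mul_eq {N a b : ℕ} (ha : a < 2 ^ (N + 1)) (hb : b < 2 ^ (N + 1)) :
    bitsAgree N a b * (if a.testBit 0 = b.testBit 0 then 1 else 0) =
      if a = b then 1 else 0 := by
  rw [bitsAgree,
    ← Finset.prod_range_succ' (fun i => if a.testBit i = b.testBit i then (1 : ℂ) else 0),
    Finset.prod_boole]
  congr 1
  refine propext ⟨fun h => Nat.eq_of_testBit_eq fun i => ?_, fun h i _ => h ▸ rfl⟩
  by_cases hi : i < N + 1
  · exact h i (Finset.mem_range.mpr hi)
  · have hN : 2 ^ (N + 1) ≤ 2 ^ i := Nat.pow_le_pow_right two_pos (by omega)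
    rw [Nat.testBit_lt_two_pow (ha.trans_le hN), Nat.testBit_lt_two_pow (hb.trans_le hN)]

lemma bitsAgree_succ_cnotTarget (t k b : ℕ) :
    bitsAgree (t + 1) (cnotTarget (t + 1) k) b = bitsAgree t k b *
      if (k.testBit (t + 1) ^^ k.testBit 0) = b.testBit (t + 1) then 1 else 0 := by
  rw [bitsAgree, Finset.prod_range_succ, bitsAgree, testBit_cnotTarget]
  congr 1
  · refine Finset.prod_congr rfl fun i hi => ?_
    have : t ≠ i := by simp at hi; omega
    simp [testBit_cnotTarget, this]
  · simp

-- The hypothesis `hS` is the formula of `Sprod_apply` at `m`, so that the induction proving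
-- `Sprod_apply` can use this lemma.
lemma photonGate_mul_Sprod_apply {n m : ℕ} (φ : ℕ → ℝ) (x : ℝ) (hm : m ≤ n)
    (j : Fin (2 ^ (n + 1)))
    (hS : ∀ r : Fin (2 ^ (n + 1)), Sprod n φ m r j =
      ((1 / Real.sqrt 2 : ℝ) : ℂ) ^ m * bitsAgree (n - m) r j *
        (uvec ((r : ℕ).testBit 0) ⬝ᵥ (transferProd n φ (fun l => (j : ℕ).testBit l)
          (fun l => (r : ℕ).testBit l) m *ᵥ vvec ((j : ℕ).testBit 0))))
    (k : Fin (2 ^ (n + 1))) :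
    (photonGate n (phaseGate x * RXgate) * Sprod n φ m) k j =
      ((1 / Real.sqrt 2 : ℝ) : ℂ) ^ (m + 1) * bitsAgree (n - m) k j *
        ((∑ b, phaseRX x (finTwoEquiv.symm ((k : ℕ).testBit 0)) (finTwoEquiv.symm b) • uvec b)
          ⬝ᵥ (transferProd n φ (fun l => (j : ℕ).testBit l) (fun l => (k : ℕ).testBit l) m *ᵥ
            vvec ((j : ℕ).testBit 0))) := by
  have hT : ∀ b, transferProd n φ (fun l => (j : ℕ).testBit l)
      (fun l => (Nat.bit b (k / 2)).testBit l) m =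
        transferProd n φ (fun l => (j : ℕ).testBit l) (fun l => (k : ℕ).testBit l) m :=
    fun b => transferProd_congr φ _ _ _ fun l hl => testBit_bit_div_two b k (n - l) (by omega)
  simp only [photonGate_mul_apply, hS, Nat.testBit_bit_zero,
    bitsAgree_congr _ (testBit_bit_div_two _ k), hT, phaseGate_mul_RXgate]
  simp only [Fintype.sum_bool, add_dotProduct, smul_dotProduct, Matrix.smul_apply, smul_eq_mul]
  ring

lemma Sprod_apply {n m : ℕ} (φ : ℕ → ℝ) (hm : m ≤ n) (k j : Fin (2 ^ (n + 1))) :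
    Sprod n φ m k j = ((1 / Real.sqrt 2 : ℝ) : ℂ) ^ m * bitsAgree (n - m) k j *
      (uvec ((k : ℕ).testBit 0) ⬝ᵥ (transferProd n φ (fun l => (j : ℕ).testBit l)
        (fun l => (k : ℕ).testBit l) m *ᵥ vvec ((j : ℕ).testBit 0))) := by
  induction m generalizing k with
  | zero =>
    rw [Sprod, transferProd, one_mulVec, uvec_dotProduct_vvec, pow_zero, one_mul, Nat.sub_zero,
      bitsAgree_mul_eq k.2 j.2, one_apply]
    exact if_congr Fin.val_inj.symm rfl rfl
  | succ m ih =>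
    obtain ⟨t, ht⟩ : ∃ t, n - m = t + 1 := ⟨n - m - 1, by omega⟩
    have ht' : n - (m + 1) = t := by omega
    have hstep : Sprod n φ (m + 1) =
        cnotGate n (t + 1) * (photonGate n (phaseGate (φ (m + 1)) * RXgate) * Sprod n φ m) := by
      rw [Sprod, stepGate, if_pos hm, show n + 1 - (m + 1) = t + 1 by omega, Matrix.mul_assoc]
    have hk : ∀ l < m, (cnotTarget (t + 1) k).testBit (n - l) = (k : ℕ).testBit (n - l) := by
      intro l hl
      rw [testBit_cnotTarget, show decide (t + 1 = n - l) = false by simp; omega,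
        Bool.false_and, Bool.xor_false]
    rw [hstep, cnotGate_mul_apply t.succ_ne_zero (by omega),
      photonGate_mul_Sprod_apply φ _ (by omega) j (ih (by omega)), ht]
    simp only [testBit_zero_cnotTarget t.succ_ne_zero, bitsAgree_succ_cnotTarget,
      transferProd_congr φ _ _ _ hk, transferProd, ht, ht', ← mulVec_mulVec,
      dotProduct_mulVec _ (transferMat _ _ _), uvec_vecMul_transferMat, smul_dotProduct,
      smul_eq_mul]
    ring

end

/-- For all indices `k = Σ_l k_l 2^l` and `j = Σ_l j_l 2^l` with bits
`k_l, j_l ∈ {0,1}`, the matrix entry of `U_Φ` satisfies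
`⟨k| U_Φ |j⟩ = 2^{−(n+1)/2} · u_{k₀}ᵀ · M_{n,j₁,k₁} · M_{n−1,j₂,k₂} ⋯ M_{1,j_n,k_n} · v_{j₀}`. -/
theorem stmt5 (n : ℕ) (hn : 1 ≤ n) (φ : ℕ → ℝ) (k j : Fin (2 ^ (n + 1))) :
    Uphi n φ k j =
      ((1 / Real.sqrt 2 : ℝ) ^ (n + 1) : ℂ) *
        (uvec ((k : ℕ).testBit 0) ⬝ᵥ
          (Mprod n φ (fun l => (j : ℕ).testBit l) (fun l => (k : ℕ).testBit l) n *ᵥ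
            vvec ((j : ℕ).testBit 0))) := by
  have hU : Uphi n φ = photonGate n (phaseGate (φ (n + 1)) * RXgate) * Sprod n φ n := by
    rw [Uphi, Sprod, stepGate, if_neg (by omega), one_mul]
  rw [hU, photonGate_mul_Sprod_apply φ _ le_rfl j (fun r => Sprod_apply φ le_rfl r j) k,
    Nat.sub_self, bitsAgree, Finset.prod_range_zero, mul_one, Mprod_self φ _ _ hn,
    ← mulVec_mulVec, dotProduct_mulVec _ (finalMat _), uvec_vecMul_finalMat]
end

section
/- For every integer k with 0 ≤ k < 2^m, with binary digits k = Σ_{l=0}^{m−1} k_l 2^l, the coordinate of U_Φ · E_{m,s,α} at basis index k equals (−1)^{Σ_{l=1}^{m−1} k_l s_l} times its coordinate at basis index k₀ ∈ {0,1}. -/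
open Complex Matrix

/-- The vector `E_{m,s,α} ∈ ℂ^{2^{n+1}}` whose coordinate at basis index
`j = Σ_{l=0}^{n} j_l 2^l` is `2^{−n/2} · (−1)^{Σ_{l=1}^{m−1} j_l s_l} · α_{j₀}`. -/
noncomputable def Evec (n m : ℕ) (s : ℕ → Bool) (α : Fin 2 → ℂ) :
    Fin (2 ^ (n + 1)) → ℂ :=
  fun j => ((1 / Real.sqrt 2 : ℝ) ^ n : ℂ) *
    (∏ l ∈ Finset.Icc 1 (m - 1), if (j : ℕ).testBit l ∧ s l then (-1 : ℂ) else 1) *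
    α ⟨(j : ℕ) % 2, by omega⟩

/-!
For a set `S` of bit positions not containing the photon bit `0`, call a vector *signed* if its
coordinate at `j` is `χ_S(j) · β(j₀)` for some `β ∈ ℂ²`, where `χ_S(j) = (−1)^{Σ_{l ∈ S} j_l}`.
A photon gate only mixes `j` with `j ⊕ 1`, on which `χ_S` agrees, so it acts on `β` alone. A CNOT
with target bit `t ≥ 1` maps `|j⟩` to `|j ⊕ j₀ 2^t⟩`, and `χ_S` is a character of `(ℕ, ⊕)`, so it
multiplies `β₁` by `χ_S(2^t)`. Hence `U_Φ` maps signed vectors to signed vectors. `E_{m,s,α}` is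
signed for `S = {1 ≤ l ≤ m − 1 | s_l}`, so `(U_Φ E)(k) = χ_S(k) β(k₀)` and `χ_S(k₀) = 1`.
-/

open Finset

noncomputable def parityChar (S : Finset ℕ) (j : ℕ) : ℂ :=
  ∏ l ∈ S, if j.testBit l then -1 else 1

lemma parityChar_xor (S : Finset ℕ) (a b : ℕ) :
    parityChar S (a ^^^ b) = parityChar S a * parityChar S b := by
  rw [parityChar, parityChar, parityChar, ← prod_mul_distrib]
  refine prod_congr rfl fun l _ => ?_
  rw [Nat.testBit_xor]
  cases a.testBit l <;> cases b.testBit l <;> norm_num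

lemma parityChar_eq_of_div_two_eq {S : Finset ℕ} (hS : 0 ∉ S) {j j' : ℕ} (h : j / 2 = j' / 2) :
    parityChar S j = parityChar S j' := by
  refine prod_congr rfl fun l hl => ?_
  obtain ⟨l, rfl⟩ := Nat.exists_eq_succ_of_ne_zero (ne_of_mem_of_not_mem hl hS)
  rw [Nat.testBit_succ, Nat.testBit_succ, h]

lemma parityChar_of_lt_two {S : Finset ℕ} (hS : 0 ∉ S) {j : ℕ} (hj : j < 2) :
    parityChar S j = 1 :=
  (parityChar_eq_of_div_two_eq hS (by omega : j / 2 = 0 / 2)).trans (by simp [parityChar])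

noncomputable def signedVec (n : ℕ) (S : Finset ℕ) (β : Fin 2 → ℂ) : Fin (2 ^ (n + 1)) → ℂ :=
  fun j => parityChar S j * β ⟨j % 2, by omega⟩

lemma sum_ite_div_two_eq {M : Type*} [AddCommMonoid M] {n q : ℕ} (hq : q < 2 ^ n)
    (g : Fin 2 → M) :
    ∑ j : Fin (2 ^ (n + 1)), (if q = (j : ℕ) / 2 then g ⟨j % 2, by omega⟩ else 0) = ∑ i, g i := by
  let e : Fin (2 ^ n) × Fin 2 ≃ Fin (2 ^ (n + 1)) :=
    finProdFinEquiv.trans (finCongr (pow_succ 2 n).symm)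
  have he : ∀ p, (e p : ℕ) = p.2 + 2 * p.1 := fun _ => rfl
  rw [← e.sum_comp, Fintype.sum_prod_type, Fintype.sum_eq_single ⟨q, hq⟩]
  · refine Fintype.sum_congr _ _ fun i => ?_
    simp only [he]
    rw [if_pos (by omega)]
    exact congrArg g (Fin.ext (by dsimp only; omega))
  · intro x hx
    refine sum_eq_zero fun y _ => if_neg fun h => hx (Fin.ext ?_)
    rw [he] at h
    dsimp only at h ⊢
    omega

lemma photonGate_mulVec_signedVec (n : ℕ) {S : Finset ℕ} (hS : 0 ∉ S)
    (A : Matrix (Fin 2) (Fin 2) ℂ) (β : Fin 2 → ℂ) :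
    photonGate n A *ᵥ signedVec n S β = signedVec n S (A *ᵥ β) := by
  ext k
  have hk : (k : ℕ) / 2 < 2 ^ n := by have := k.2; have := pow_succ 2 n; omega
  have hterm : ∀ j : Fin (2 ^ (n + 1)), photonGate n A k j * signedVec n S β j =
      parityChar S k * if (k : ℕ) / 2 = j / 2 then
        A ⟨k % 2, by omega⟩ ⟨j % 2, by omega⟩ * β ⟨j % 2, by omega⟩ else 0 := by
    intro j
    simp only [photonGate, signedVec]
    split_ifs with h
    · rw [parityChar_eq_of_div_two_eq hS h]
      ring
    · rw [zero_mul, mul_zero]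
  show ∑ j, photonGate n A k j * signedVec n S β j =
    parityChar S k * (A *ᵥ β) ⟨k % 2, by omega⟩
  rw [Fintype.sum_congr _ _ hterm, ← mul_sum,
    sum_ite_div_two_eq hk fun i => A ⟨k % 2, by omega⟩ i * β i]
  rfl

def cnotIndex (t j : ℕ) : ℕ := if j % 2 = 1 then j ^^^ 2 ^ t else j

lemma cnotIndex_eq_xor (t j : ℕ) : cnotIndex t j = j ^^^ j % 2 * 2 ^ t := by
  unfold cnotIndex
  split_ifs with h
  · rw [h, one_mul]
  · rw [show j % 2 = 0 by omega, zero_mul, Nat.xor_zero]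

lemma cnotIndex_mod_two {t : ℕ} (ht : 1 ≤ t) (j : ℕ) : cnotIndex t j % 2 = j % 2 := by
  obtain ⟨t, rfl⟩ : ∃ t', t = t' + 1 := ⟨t - 1, by omega⟩
  rw [cnotIndex_eq_xor, Nat.xor_mod_two_eq, pow_succ, ← mul_assoc, Nat.add_mul_mod_self_right]

lemma cnotIndex_cnotIndex {t : ℕ} (ht : 1 ≤ t) (j : ℕ) : cnotIndex t (cnotIndex t j) = j := by
  rw [cnotIndex_eq_xor t (cnotIndex t j), cnotIndex_mod_two ht, cnotIndex_eq_xor, Nat.xor_assoc,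
    Nat.xor_self, Nat.xor_zero]

lemma cnotIndex_lt {n t j : ℕ} (htn : t ≤ n) (hj : j < 2 ^ (n + 1)) :
    cnotIndex t j < 2 ^ (n + 1) := by
  unfold cnotIndex
  split_ifs
  · exact Nat.xor_lt_two_pow hj (Nat.pow_lt_pow_right one_lt_two (by omega))
  · exact hj

lemma cnotGate_mulVec {n t : ℕ} (ht : 1 ≤ t) (htn : t ≤ n) (v : Fin (2 ^ (n + 1)) → ℂ)
    (k : Fin (2 ^ (n + 1))) :
    (cnotGate n t *ᵥ v) k = v ⟨cnotIndex t k, cnotIndex_lt htn k.2⟩ := by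
  have hentry : ∀ j, cnotGate n t k j =
      if ⟨cnotIndex t k, cnotIndex_lt htn k.2⟩ = j then 1 else 0 := by
    intro j
    show (if (k : ℕ) = cnotIndex t j then (1 : ℂ) else 0) = _
    refine if_congr ⟨fun h => Fin.ext ?_, fun h => ?_⟩ rfl rfl
    · exact (congrArg (cnotIndex t) h).trans (cnotIndex_cnotIndex ht j)
    · subst h
      exact (cnotIndex_cnotIndex ht k).symm
  simp only [mulVec, dotProduct, hentry, ite_mul, one_mul, zero_mul, sum_ite_eq, mem_univ,
    if_true]

lemma cnotGate_mulVec_signedVec {n t : ℕ} (ht : 1 ≤ t) (htn : t ≤ n) (S : Finset ℕ)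
    (β : Fin 2 → ℂ) :
    cnotGate n t *ᵥ signedVec n S β = signedVec n S fun i => parityChar S (i * 2 ^ t) * β i := by
  ext k
  rw [cnotGate_mulVec ht htn]
  simp only [signedVec, cnotIndex_mod_two ht]
  rw [show parityChar S (cnotIndex t k) = _ from congrArg _ (cnotIndex_eq_xor t k),
    parityChar_xor]
  ring

lemma stepGate_mulVec_signedVec {n : ℕ} (φ : ℕ → ℝ) {r : ℕ} (hr : 1 ≤ r) {S : Finset ℕ}
    (hS : 0 ∉ S) (β : Fin 2 → ℂ) :
    ∃ β', stepGate n φ r *ᵥ signedVec n S β = signedVec n S β' := by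
  rw [stepGate, ← mulVec_mulVec, photonGate_mulVec_signedVec n hS]
  split_ifs with hrn
  · exact ⟨_, cnotGate_mulVec_signedVec (by omega) (by omega) S _⟩
  · exact ⟨_, one_mulVec _⟩

lemma Sprod_mulVec_signedVec {n : ℕ} (φ : ℕ → ℝ) {S : Finset ℕ} (hS : 0 ∉ S) (r : ℕ)
    (β : Fin 2 → ℂ) : ∃ β', Sprod n φ r *ᵥ signedVec n S β = signedVec n S β' := by
  induction r with
  | zero => exact ⟨β, one_mulVec _⟩
  | succ r ih =>
    obtain ⟨β', hβ'⟩ := ih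
    obtain ⟨β'', hβ''⟩ := stepGate_mulVec_signedVec φ r.succ_pos hS β'
    exact ⟨β'', by rw [Sprod, ← mulVec_mulVec, hβ', hβ'']⟩

/-- For every `0 ≤ k < 2^m` with binary digits `k = Σ_{l=0}^{m−1} k_l 2^l`,
the coordinate of `U_Φ · E_{m,s,α}` at basis index `k` equals
`(−1)^{Σ_{l=1}^{m−1} k_l s_l}` times its coordinate at basis index `k₀ = k mod 2 ∈ {0,1}`. -/
theorem stmt9 (n m : ℕ) (hmn : m ≤ n + 1)
    (φ : ℕ → ℝ) (s : ℕ → Bool) (α : Fin 2 → ℂ)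
    (k : ℕ) (hk : k < 2 ^ m) :
    (Uphi n φ *ᵥ Evec n m s α)
        ⟨k, lt_of_lt_of_le hk (Nat.pow_le_pow_right (by norm_num) hmn)⟩ =
      (∏ l ∈ Finset.Icc 1 (m - 1), if k.testBit l ∧ s l then (-1 : ℂ) else 1) *
        (Uphi n φ *ᵥ Evec n m s α)
          ⟨k % 2, lt_of_lt_of_le (Nat.mod_lt _ two_pos)
            (by calc (2 : ℕ) = 2 ^ 1 := (pow_one 2).symm
              _ ≤ 2 ^ (n + 1) := Nat.pow_le_pow_right (by norm_num) (by omega))⟩ := by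
  set S := (Icc 1 (m - 1)).filter fun l => s l = true
  have hS : 0 ∉ S := by simp [S]
  have hchar : ∀ j : ℕ, (∏ l ∈ Icc 1 (m - 1), if j.testBit l ∧ s l then (-1 : ℂ) else 1) =
      parityChar S j := by
    intro j
    rw [parityChar, prod_filter]
    refine prod_congr rfl fun l _ => ?_
    by_cases hl : s l <;> simp [hl]
  have hE : Evec n m s α = signedVec n S fun i => ((1 / Real.sqrt 2 : ℝ) ^ n : ℂ) * α i := by
    ext j
    simp only [Evec, signedVec, hchar]
    ring
  obtain ⟨β, hβ⟩ := Sprod_mulVec_signedVec φ hS (n + 1) _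
  rw [Uphi, hE, hβ, hchar]
  simp only [signedVec, parityChar_of_lt_two hS (k.mod_lt two_pos), one_mul, Nat.mod_mod]
end

section
/- Duality of the ancillary-qubit solution: suppose a₀, b₀, a₁ ∈ ℝ satisfy a₀² + b₀² + a₁² = 1 and a₀ = −b₀·cot((γ₀₁ − γ₁₀)/2), and set α₀ = a₀ + i·b₀, α₁ = a₁. Assume (i) |ϱ₀₀·α₀ + ϱ₁₀·α₁|² = |α₀|²/2ⁿ, (ii) |ϱ₀₁·α₀ + ϱ₁₁·α₁|² = |α₁|²/2ⁿ, and (iii) α₁·(ϱ₀₀·α₀ + ϱ₁₀·α₁) = α₀·(ϱ₀₁·α₀ + ϱ₁₁·α₁). Then the dual pair α₀' = a₁, α₁' = −a₀ + i·b₀ also satisfies (i'), (ii'), (iii'): |ϱ₀₀·α₀' + ϱ₁₀·α₁'|² = |α₀'|²/2ⁿ, |ϱ₀₁·α₀' + ϱ₁₁·α₁'|² = |α₁'|²/2ⁿ, and α₁'·(ϱ₀₀·α₀' + ϱ₁₀·α₁') = α₀'·(ϱ₀₁·α₀' + ϱ₁₁·α₁'). -/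
/-!
With `u = e^{i(γ₀₁ + γ₁₀)}`, a unimodular number, the coefficients satisfy
`ϱ₀₁ = u ϱ̄₁₀` and `ϱ₁₁ = -u ϱ̄₀₀`. For such a matrix the map `(α₀, α₁) ↦ (ᾱ₁, -ᾱ₀)` sends the
two amplitudes `ϱ₀₀ α₀ + ϱ₁₀ α₁` and `ϱ₀₁ α₀ + ϱ₁₁ α₁` to `-u` times the conjugate of the second
and `u` times the conjugate of the first. Hence conditions (i) and (ii) are exchanged and (iii) is
conjugated. Since `α₁ = a₁` is real, the dual pair `(a₁, -a₀ + i b₀)` is exactly `(ᾱ₁, -ᾱ₀)`.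
-/

open Complex ComplexConjugate

def IsAncillaSolution (ϱ₀₀ ϱ₁₀ ϱ₀₁ ϱ₁₁ : ℂ) (N : ℝ) (α₀ α₁ : ℂ) : Prop :=
  ‖ϱ₀₀ * α₀ + ϱ₁₀ * α₁‖ ^ 2 = ‖α₀‖ ^ 2 / N ∧
    ‖ϱ₀₁ * α₀ + ϱ₁₁ * α₁‖ ^ 2 = ‖α₁‖ ^ 2 / N ∧
    α₁ * (ϱ₀₀ * α₀ + ϱ₁₀ * α₁) = α₀ * (ϱ₀₁ * α₀ + ϱ₁₁ * α₁)

section Duality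

variable {ϱ₀₀ ϱ₁₀ ϱ₀₁ ϱ₁₁ u : ℂ}

theorem dual_first_amplitude (hu : ‖u‖ = 1) (h₀₁ : ϱ₀₁ = u * conj ϱ₁₀)
    (h₁₁ : ϱ₁₁ = -(u * conj ϱ₀₀)) (α₀ α₁ : ℂ) :
    ϱ₀₀ * conj α₁ + ϱ₁₀ * -conj α₀ = -(u * conj (ϱ₀₁ * α₀ + ϱ₁₁ * α₁)) := by
  have hu' : u * conj u = 1 := by rw [mul_conj, normSq_eq_norm_sq, hu]; norm_num
  subst h₀₁ h₁₁
  simp only [map_add, map_mul, map_neg, conj_conj]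
  linear_combination (ϱ₁₀ * conj α₀ - ϱ₀₀ * conj α₁) * hu'

theorem dual_second_amplitude (h₀₁ : ϱ₀₁ = u * conj ϱ₁₀)
    (h₁₁ : ϱ₁₁ = -(u * conj ϱ₀₀)) (α₀ α₁ : ℂ) :
    ϱ₀₁ * conj α₁ + ϱ₁₁ * -conj α₀ = u * conj (ϱ₀₀ * α₀ + ϱ₁₀ * α₁) := by
  subst h₀₁ h₁₁
  simp only [map_add, map_mul]
  ring

theorem IsAncillaSolution.dual {N : ℝ} {α₀ α₁ : ℂ} (hu : ‖u‖ = 1)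
    (h₀₁ : ϱ₀₁ = u * conj ϱ₁₀) (h₁₁ : ϱ₁₁ = -(u * conj ϱ₀₀))
    (h : IsAncillaSolution ϱ₀₀ ϱ₁₀ ϱ₀₁ ϱ₁₁ N α₀ α₁) :
    IsAncillaSolution ϱ₀₀ ϱ₁₀ ϱ₀₁ ϱ₁₁ N (conj α₁) (-conj α₀) := by
  obtain ⟨h₁, h₂, h₃⟩ := h
  rw [IsAncillaSolution, dual_first_amplitude hu h₀₁ h₁₁, dual_second_amplitude h₀₁ h₁₁]
  refine ⟨?_, ?_, ?_⟩
  · rw [norm_neg, norm_mul, hu, one_mul, norm_conj, h₂, norm_conj]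
  · rw [norm_mul, hu, one_mul, norm_conj, h₁, norm_neg, norm_conj]
  · have h₃' : conj α₁ * conj (ϱ₀₀ * α₀ + ϱ₁₀ * α₁) =
        conj α₀ * conj (ϱ₀₁ * α₀ + ϱ₁₁ * α₁) := by
      rw [← map_mul, ← map_mul, h₃]
    linear_combination -u * h₃'

end Duality

theorem exp_I_mul_mul_conj_ofReal_mul_exp_I_mul (r x y : ℝ) :
    exp (I * x) * conj (r * exp (I * y)) = r * exp (I * (x - y)) := by
  rw [map_mul, conj_ofReal, ← exp_conj, mul_left_comm, ← exp_add]
  simp only [map_mul, conj_I, conj_ofReal]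
  ring_nf

theorem stmt13_general (n : ℕ) (ω γ₀₀ γ₀₁ γ₁₀ : ℝ) (a₀ b₀ a₁ : ℝ) :
    let c : ℂ := ((1 / Real.sqrt 2 : ℝ) ^ n : ℂ)
    let ϱ₀₀ : ℂ := c * Real.cos ω * Complex.exp (I * γ₀₀)
    let ϱ₁₀ : ℂ := c * Real.sin ω * Complex.exp (I * γ₁₀)
    let ϱ₀₁ : ℂ := c * Real.sin ω * Complex.exp (I * γ₀₁)
    let ϱ₁₁ : ℂ := -(c * Real.cos ω * Complex.exp (I * (γ₀₁ + γ₁₀ - γ₀₀)))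
    let α₀ : ℂ := (a₀ : ℂ) + b₀ * I
    let α₁ : ℂ := (a₁ : ℂ)
    let α₀' : ℂ := (a₁ : ℂ)
    let α₁' : ℂ := -(a₀ : ℂ) + b₀ * I
    ‖ϱ₀₀ * α₀ + ϱ₁₀ * α₁‖ ^ 2 = ‖α₀‖ ^ 2 / 2 ^ n →
    ‖ϱ₀₁ * α₀ + ϱ₁₁ * α₁‖ ^ 2 = ‖α₁‖ ^ 2 / 2 ^ n →
    α₁ * (ϱ₀₀ * α₀ + ϱ₁₀ * α₁) = α₀ * (ϱ₀₁ * α₀ + ϱ₁₁ * α₁) →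
    (‖ϱ₀₀ * α₀' + ϱ₁₀ * α₁'‖ ^ 2 = ‖α₀'‖ ^ 2 / 2 ^ n ∧
      ‖ϱ₀₁ * α₀' + ϱ₁₁ * α₁'‖ ^ 2 = ‖α₁'‖ ^ 2 / 2 ^ n ∧
      α₁' * (ϱ₀₀ * α₀' + ϱ₁₀ * α₁') = α₀' * (ϱ₀₁ * α₀' + ϱ₁₁ * α₁')) := by
  intro c ϱ₀₀ ϱ₁₀ ϱ₀₁ ϱ₁₁ α₀ α₁ α₀' α₁' h₁ h₂ h₃
  have hu : ‖exp (I * ↑(γ₀₁ + γ₁₀))‖ = 1 := by rw [mul_comm, norm_exp_ofReal_mul_I]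
  have h₀₁ : ϱ₀₁ = exp (I * ↑(γ₀₁ + γ₁₀)) * conj ϱ₁₀ := by
    simp only [ϱ₀₁, ϱ₁₀, c, ← ofReal_pow, ← ofReal_mul]
    rw [exp_I_mul_mul_conj_ofReal_mul_exp_I_mul, ofReal_add, add_sub_cancel_right]
  have h₁₁ : ϱ₁₁ = -(exp (I * ↑(γ₀₁ + γ₁₀)) * conj ϱ₀₀) := by
    simp only [ϱ₁₁, ϱ₀₀, c, ← ofReal_pow, ← ofReal_mul]
    rw [exp_I_mul_mul_conj_ofReal_mul_exp_I_mul, ofReal_add]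
  have hα₀' : α₀' = conj α₁ := (conj_ofReal a₁).symm
  have hα₁' : α₁' = -conj α₀ := by
    simp only [α₀, α₁', map_add, map_mul, conj_ofReal, conj_I]
    ring
  rw [hα₀', hα₁']
  exact IsAncillaSolution.dual hu h₀₁ h₁₁ ⟨h₁, h₂, h₃⟩

/-- **duality of the ancillary-qubit solution.** Let `n : ℕ` and
`ω, γ₀₀, γ₀₁, γ₁₀ : ℝ` with `sin((γ₀₁ − γ₁₀)/2) ≠ 0` and with `cos(γ₀₀ + γ₀₁)`,
`cos(γ₀₀ + γ₁₀)`, `sin(γ₀₀ + γ₀₁)`, `sin(γ₀₀ + γ₁₀)` all nonzero.  Define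
`ϱ₀₀ = 2^{−n/2} cos ω e^{iγ₀₀}`, `ϱ₁₀ = 2^{−n/2} sin ω e^{iγ₁₀}`,
`ϱ₀₁ = 2^{−n/2} sin ω e^{iγ₀₁}`, `ϱ₁₁ = −2^{−n/2} cos ω e^{i(γ₀₁+γ₁₀−γ₀₀)}`.
Suppose `a₀, b₀, a₁ : ℝ` satisfy `a₀² + b₀² + a₁² = 1` and `a₀ = −b₀ cot((γ₀₁−γ₁₀)/2)`,
and set `α₀ = a₀ + i b₀`, `α₁ = a₁`.  If (i) `|ϱ₀₀ α₀ + ϱ₁₀ α₁|² = |α₀|²/2ⁿ`,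
(ii) `|ϱ₀₁ α₀ + ϱ₁₁ α₁|² = |α₁|²/2ⁿ` and (iii) `α₁(ϱ₀₀ α₀ + ϱ₁₀ α₁) = α₀(ϱ₀₁ α₀ + ϱ₁₁ α₁)`,
then the dual pair `α₀' = a₁`, `α₁' = −a₀ + i b₀` also satisfies (i'), (ii'), (iii'). -/
theorem stmt13 (n : ℕ) (ω γ₀₀ γ₀₁ γ₁₀ : ℝ)
    (hhalf : Real.sin ((γ₀₁ - γ₁₀) / 2) ≠ 0)
    (hc1 : Real.cos (γ₀₀ + γ₀₁) ≠ 0) (hc2 : Real.cos (γ₀₀ + γ₁₀) ≠ 0)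
    (hs1 : Real.sin (γ₀₀ + γ₀₁) ≠ 0) (hs2 : Real.sin (γ₀₀ + γ₁₀) ≠ 0)
    (a₀ b₀ a₁ : ℝ) (hnorm : a₀ ^ 2 + b₀ ^ 2 + a₁ ^ 2 = 1)
    (hcot : a₀ = -b₀ * Real.cot ((γ₀₁ - γ₁₀) / 2)) :
    let c : ℂ := ((1 / Real.sqrt 2 : ℝ) ^ n : ℂ)
    let ϱ₀₀ : ℂ := c * Real.cos ω * Complex.exp (I * γ₀₀)
    let ϱ₁₀ : ℂ := c * Real.sin ω * Complex.exp (I * γ₁₀)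
    let ϱ₀₁ : ℂ := c * Real.sin ω * Complex.exp (I * γ₀₁)
    let ϱ₁₁ : ℂ := -(c * Real.cos ω * Complex.exp (I * (γ₀₁ + γ₁₀ - γ₀₀)))
    let α₀ : ℂ := (a₀ : ℂ) + b₀ * I
    let α₁ : ℂ := (a₁ : ℂ)
    let α₀' : ℂ := (a₁ : ℂ)
    let α₁' : ℂ := -(a₀ : ℂ) + b₀ * I
    ‖ϱ₀₀ * α₀ + ϱ₁₀ * α₁‖ ^ 2 = ‖α₀‖ ^ 2 / 2 ^ n →
    ‖ϱ₀₁ * α₀ + ϱ₁₁ * α₁‖ ^ 2 = ‖α₁‖ ^ 2 / 2 ^ n →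
    α₁ * (ϱ₀₀ * α₀ + ϱ₁₀ * α₁) = α₀ * (ϱ₀₁ * α₀ + ϱ₁₁ * α₁) →
    (‖ϱ₀₀ * α₀' + ϱ₁₀ * α₁'‖ ^ 2 = ‖α₀'‖ ^ 2 / 2 ^ n ∧
      ‖ϱ₀₁ * α₀' + ϱ₁₁ * α₁'‖ ^ 2 = ‖α₁'‖ ^ 2 / 2 ^ n ∧
      α₁' * (ϱ₀₀ * α₀' + ϱ₁₀ * α₁') = α₀' * (ϱ₀₁ * α₀' + ϱ₁₁ * α₁')) :=
  stmt13_general n ω γ₀₀ γ₀₁ γ₁₀ a₀ b₀ a₁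
end
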